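/- arXiv:math/9712280 — 2 statements merged into one kernel-verified Lean document; each statement's English description precedes it below -/
import Mathlib

section
/- (Interior Schwarz Lemma) Suppose f satisfies (a), (b), (c). Then for every z with |z| < 1, |f(z)| ≤ |z| · (|z| + |f'(0)|)/(1 + |f'(0)| |z|). -/
/-!
By the Schwarz lemma, `g = dslope f 0` (that is, `f z / z`, with `g 0 = f' 0`) maps the disk into
the closed disk. Composing `g` with the Blaschke factor that moves `a = g 0` to `0` and applying
the Schwarz lemma once more gives the Schwarz–Pick bound `‖(g z - a) / (1 - conj a * g z)‖ ≤ ‖z‖`,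
and the identity `‖1 - conj a * w‖² - ‖w - a‖² = (1 - ‖a‖²)(1 - ‖w‖²)` turns it into
`‖g z‖ ≤ (‖z‖ + ‖a‖) / (1 + ‖a‖ ‖z‖)`. When `‖a‖ = 1` this bound is `1` and holds trivially.
-/

open Complex ComplexConjugate Metric Set

noncomputable def blaschkeFactor (a w : ℂ) : ℂ :=
  (w - a) / (1 - conj a * w)

lemma blaschkeFactor_self (a : ℂ) : blaschkeFactor a a = 0 := by
  simp [blaschkeFactor]

lemma sq_norm_one_sub_conj_mul_sub_sq_norm_sub (a w : ℂ) :
    ‖1 - conj a * w‖ ^ 2 - ‖w - a‖ ^ 2 = (1 - ‖a‖ ^ 2) * (1 - ‖w‖ ^ 2) := by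
  simp only [Complex.sq_norm, normSq_apply, sub_re, sub_im, mul_re, mul_im, one_re, one_im,
    conj_re, conj_im]
  ring

lemma one_sub_norm_mul_norm_le_norm_one_sub_conj_mul (a w : ℂ) :
    1 - ‖a‖ * ‖w‖ ≤ ‖1 - conj a * w‖ := by
  simpa [norm_mul] using norm_sub_norm_le (1 : ℂ) (conj a * w)

lemma one_sub_conj_mul_ne_zero {a w : ℂ} (ha : ‖a‖ < 1) (hw : ‖w‖ ≤ 1) :
    1 - conj a * w ≠ 0 := by
  have : 0 < 1 - ‖a‖ * ‖w‖ := by nlinarith [norm_nonneg a, norm_nonneg w]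
  exact norm_pos_iff.mp (this.trans_le (one_sub_norm_mul_norm_le_norm_one_sub_conj_mul a w))

lemma norm_blaschkeFactor_le_one {a w : ℂ} (ha : ‖a‖ < 1) (hw : ‖w‖ ≤ 1) :
    ‖blaschkeFactor a w‖ ≤ 1 := by
  have hD := norm_pos_iff.mpr (one_sub_conj_mul_ne_zero ha hw)
  rw [blaschkeFactor, norm_div, div_le_one hD, ← sq_le_sq₀ (norm_nonneg _) hD.le, ← sub_nonneg,
    sq_norm_one_sub_conj_mul_sub_sq_norm_sub]
  have := norm_nonneg a
  have := norm_nonneg w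
  exact mul_nonneg (by nlinarith) (by nlinarith)

lemma DifferentiableOn.blaschkeFactor {g : ℂ → ℂ} {s : Set ℂ} {a : ℂ}
    (hg : DifferentiableOn ℂ g s) (hs : MapsTo g s (closedBall 0 1)) (ha : ‖a‖ < 1) :
    DifferentiableOn ℂ (fun z ↦ blaschkeFactor a (g z)) s :=
  (hg.sub_const a).div (hg.const_mul _ |>.const_sub 1) fun _ hz ↦
    one_sub_conj_mul_ne_zero ha (mem_closedBall_zero_iff.mp (hs hz))

lemma norm_le_of_norm_blaschkeFactor_le {a w : ℂ} {r : ℝ} (ha : ‖a‖ < 1) (hw : ‖w‖ ≤ 1)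
    (hr : r ≤ 1) (h : ‖blaschkeFactor a w‖ ≤ r) :
    ‖w‖ ≤ (r + ‖a‖) / (1 + ‖a‖ * r) := by
  have hD := norm_pos_iff.mpr (one_sub_conj_mul_ne_zero ha hw)
  have hr₀ : 0 ≤ r := (norm_nonneg _).trans h
  rw [blaschkeFactor, norm_div, div_le_iff₀ hD] at h
  have hid := sq_norm_one_sub_conj_mul_sub_sq_norm_sub a w
  have hlow := one_sub_norm_mul_norm_le_norm_one_sub_conj_mul a w
  set A := ‖a‖
  set G := ‖w‖
  set D := ‖1 - conj a * w‖
  have hA₀ : 0 ≤ A := norm_nonneg a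
  have hG₀ : 0 ≤ G := norm_nonneg w
  have hlow₀ : 0 ≤ 1 - A * G := by nlinarith
  -- `(1 - A G)² - (G - A)² = (1 - A²)(1 - G²) = D² - ‖w - a‖²`
  have hsq : (G - A) ^ 2 ≤ (r * (1 - A * G)) ^ 2 := by
    have := sq_le_sq₀ (norm_nonneg _) (by positivity) |>.mpr h
    have hr₁ : 0 ≤ 1 - r ^ 2 := by nlinarith
    have hD₁ : 0 ≤ D ^ 2 - (1 - A * G) ^ 2 := by nlinarith
    nlinarith [mul_nonneg hr₁ hD₁]
  have := (abs_le_of_sq_le_sq' hsq (by positivity)).2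
  rw [le_div_iff₀ (by positivity)]
  nlinarith

lemma norm_blaschkeFactor_apply_le_of_mapsTo_ball {g : ℂ → ℂ}
    (hd : DifferentiableOn ℂ g (ball 0 1)) (h_maps : MapsTo g (ball 0 1) (closedBall 0 1))
    (h₀ : ‖g 0‖ < 1) {z : ℂ} (hz : ‖z‖ < 1) :
    ‖blaschkeFactor (g 0) (g z)‖ ≤ ‖z‖ :=
  Complex.norm_le_norm_of_mapsTo_ball (hd.blaschkeFactor h_maps h₀)
    (fun _ hw ↦ mem_closedBall_zero_iff.mpr <|
      norm_blaschkeFactor_le_one h₀ (mem_closedBall_zero_iff.mp (h_maps hw)))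
    (blaschkeFactor_self _) hz

lemma norm_le_add_div_one_add_mul_of_mapsTo_ball {g : ℂ → ℂ}
    (hd : DifferentiableOn ℂ g (ball 0 1)) (h_maps : MapsTo g (ball 0 1) (closedBall 0 1))
    {z : ℂ} (hz : ‖z‖ < 1) :
    ‖g z‖ ≤ (‖z‖ + ‖g 0‖) / (1 + ‖g 0‖ * ‖z‖) := by
  have hg (w : ℂ) (hw : ‖w‖ < 1) : ‖g w‖ ≤ 1 :=
    mem_closedBall_zero_iff.mp (h_maps (mem_ball_zero_iff.mpr hw))
  rcases (hg 0 (by simp)).lt_or_eq with h₀ | h₀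
  · exact norm_le_of_norm_blaschkeFactor_le h₀ (hg z hz) hz.le
      (norm_blaschkeFactor_apply_le_of_mapsTo_ball hd h_maps h₀ hz)
  · rw [h₀, one_mul, add_comm, div_self (by positivity)]
    exact hg z hz

/-- **Interior Schwarz Lemma.** If `f` is holomorphic on the unit disk, maps it into
itself, and `f 0 = 0`, then `|f z| ≤ |z| (|z| + |f'(0)|) / (1 + |f'(0)| |z|)`. -/
theorem interior_schwarz_lemma
    (f : ℂ → ℂ)
    (ha : DifferentiableOn ℂ f {z : ℂ | ‖z‖ < 1})
    (hb : ∀ z : ℂ, ‖z‖ < 1 → ‖f z‖ < 1)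
    (hc : f 0 = 0) :
    ∀ z : ℂ, ‖z‖ < 1 →
      ‖f z‖ ≤ ‖z‖ *
        ((‖z‖ + ‖deriv f 0‖) /
          (1 + ‖deriv f 0‖ * ‖z‖)) := by
  intro z hz
  rw [← ball_zero_eq] at ha
  have h_maps : MapsTo (dslope f 0) (ball 0 1) (closedBall 0 1) := fun w hw ↦ by
    simpa using Complex.norm_dslope_le_div_of_mapsTo_ball ha
      (fun v hv ↦ by simpa [hc] using (hb v (mem_ball_zero_iff.mp hv)).le) hw
  have hd : DifferentiableOn ℂ (dslope f 0) (ball 0 1) :=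
    (differentiableOn_dslope (ball_mem_nhds 0 one_pos)).mpr ha
  have hfz : f z = z * dslope f 0 z := by
    simpa [hc] using (sub_smul_dslope f 0 z).symm
  rw [hfz, norm_mul, ← dslope_same f 0]
  exact mul_le_mul_of_nonneg_left
    (norm_le_add_div_one_add_mul_of_mapsTo_ball hd h_maps hz) (norm_nonneg z)
end

section
/- (General Boundary Lemma) Suppose f satisfies (a), (b), (d) (the condition f(0) = 0 is not assumed), and let F(z) = (f(z) − f(0))/(1 − conj(f(0)) · f(z)). Then |f'(b)| ≥ (2/(1 + |F'(0)|)) · (1 − |f(0)|)/(1 + |f(0)|). -/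
open Complex Filter

/-!
Write `φ_a z = (z - a) / (1 - ā z)` and `F = φ_{f 0} ∘ f`, so `F 0 = 0` and `c = |F'(0)| ≤ 1`.
The function `dslope F 0` is again a self-map of the disc, with value `F'(0)` at `0`, so the
Schwarz–Pick growth bound `|h z| ≤ (|z| + |h 0|) / (1 + |h 0| |z|)` applied to it gives
`|F z| ≤ |z| (|z| + c) / (1 + c |z|)`. Since `f = φ_{-f 0} ∘ F`, the identity
`1 - |φ_a z|² = (1 - |a|²)(1 - |z|²) / |1 - ā z|²` turns this into a lower bound for
`1 - |f z|²`. Along the radius `z = r b` we have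
`|f(rb) - f(b)| / |rb - b| ≥ (1 - |f(rb)|) / (1 - r)`, which the lower bound makes at least a
continuous function of `r` with value `2 / (1 + c) · (1 - |f 0|) / (1 + |f 0|)` at `r = 1`;
the left side tends to `|f'(b)|`.
-/

open Metric Set Topology

noncomputable def mobius (a z : ℂ) : ℂ := (z - a) / (1 - starRingEnd ℂ a * z)

section Mobius

variable {a z : ℂ}

lemma normSq_one_sub_conj_mul_sub_normSq_sub (a z : ℂ) :
    normSq (1 - starRingEnd ℂ a * z) - normSq (z - a) = (1 - normSq a) * (1 - normSq z) := by
  simp only [normSq_apply, sub_re, sub_im, mul_re, mul_im, one_re, one_im, conj_re, conj_im]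
  ring

lemma one_sub_conj_mul_ne_zero_s10 (ha : ‖a‖ < 1) (hz : ‖z‖ ≤ 1) : 1 - starRingEnd ℂ a * z ≠ 0 := by
  have : ‖starRingEnd ℂ a * z‖ < 1 := by
    rw [norm_mul, norm_conj]
    nlinarith [norm_nonneg a, norm_nonneg z]
  exact fun h => this.ne (by rw [← sub_eq_zero.1 h, norm_one])

lemma one_sub_norm_mobius_sq (ha : ‖a‖ < 1) (hz : ‖z‖ ≤ 1) :
    1 - ‖mobius a z‖ ^ 2 = (1 - ‖a‖ ^ 2) * (1 - ‖z‖ ^ 2) / ‖1 - starRingEnd ℂ a * z‖ ^ 2 := by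
  have hD := one_sub_conj_mul_ne_zero_s10 ha hz
  have hD' : normSq (1 - starRingEnd ℂ a * z) ≠ 0 := normSq_eq_zero.not.2 hD
  simp only [mobius, norm_div, div_pow, Complex.sq_norm]
  rw [eq_div_iff hD', sub_mul, div_mul_cancel₀ _ hD', one_mul]
  linear_combination normSq_one_sub_conj_mul_sub_normSq_sub a z

lemma norm_mobius_le_one (ha : ‖a‖ < 1) (hz : ‖z‖ ≤ 1) : ‖mobius a z‖ ≤ 1 := by
  have h := one_sub_norm_mobius_sq ha hz
  have : 0 ≤ (1 - ‖a‖ ^ 2) * (1 - ‖z‖ ^ 2) / ‖1 - starRingEnd ℂ a * z‖ ^ 2 := by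
    have : ‖a‖ ^ 2 ≤ 1 := by nlinarith [norm_nonneg a]
    have : ‖z‖ ^ 2 ≤ 1 := by nlinarith [norm_nonneg z]
    positivity
  nlinarith [norm_nonneg (mobius a z)]

lemma mobius_self (a : ℂ) : mobius a a = 0 := by simp [mobius]

lemma mobius_neg_mobius (ha : ‖a‖ < 1) (hz : ‖z‖ ≤ 1) : mobius (-a) (mobius a z) = z := by
  have hD : 1 - z * starRingEnd ℂ a ≠ 0 :=
    mul_comm z (starRingEnd ℂ a) ▸ one_sub_conj_mul_ne_zero_s10 ha hz
  have hD' : 1 - starRingEnd ℂ (-a) * mobius a z ≠ 0 :=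
    one_sub_conj_mul_ne_zero_s10 (by rwa [norm_neg]) (norm_mobius_le_one ha hz)
  rw [mobius, div_eq_iff hD', mobius, map_neg]
  field_simp
  ring

lemma norm_one_sub_conj_mul_le (a z : ℂ) : ‖1 - starRingEnd ℂ a * z‖ ≤ 1 + ‖a‖ * ‖z‖ := by
  simpa [norm_mul] using norm_sub_le 1 (starRingEnd ℂ a * z)

lemma one_sub_norm_mobius_sq_ge (ha : ‖a‖ < 1) (hz : ‖z‖ ≤ 1) :
    (1 - ‖a‖ ^ 2) * (1 - ‖z‖ ^ 2) / (1 + ‖a‖ * ‖z‖) ^ 2 ≤ 1 - ‖mobius a z‖ ^ 2 := by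
  rw [one_sub_norm_mobius_sq ha hz]
  have : 0 ≤ (1 - ‖a‖ ^ 2) * (1 - ‖z‖ ^ 2) := by
    have : ‖a‖ ^ 2 ≤ 1 := by nlinarith [norm_nonneg a]
    have : ‖z‖ ^ 2 ≤ 1 := by nlinarith [norm_nonneg z]
    positivity
  have hD : 0 < ‖1 - starRingEnd ℂ a * z‖ := norm_pos_iff.2 (one_sub_conj_mul_ne_zero_s10 ha hz)
  gcongr
  exact norm_one_sub_conj_mul_le a z

lemma norm_mobius_le (ha : ‖a‖ < 1) (hz : ‖z‖ ≤ 1) :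
    ‖mobius a z‖ ≤ (‖z‖ + ‖a‖) / (1 + ‖a‖ * ‖z‖) := by
  have hE : 0 < 1 + ‖a‖ * ‖z‖ := by positivity
  have h := one_sub_norm_mobius_sq_ge ha hz
  rw [le_div_iff₀ hE]
  refine (pow_le_pow_iff_left₀ (by positivity) (by positivity) two_ne_zero).1 ?_
  rw [div_le_iff₀ (by positivity)] at h
  -- `(1 + |a||z|)² - (1 - |a|²)(1 - |z|²) = (|z| + |a|)²`
  nlinarith

lemma one_sub_norm_sq_mul_le_one_sub_norm_mobius_sq (ha : ‖a‖ < 1) (hz : ‖z‖ ≤ 1) :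
    (1 - ‖a‖) / (1 + ‖a‖) * (1 - ‖z‖ ^ 2) ≤ 1 - ‖mobius a z‖ ^ 2 := by
  have : 0 ≤ 1 - ‖z‖ ^ 2 := by nlinarith [norm_nonneg z]
  have : 0 ≤ 1 - ‖a‖ ^ 2 := by nlinarith [norm_nonneg a]
  calc (1 - ‖a‖) / (1 + ‖a‖) * (1 - ‖z‖ ^ 2)
      = (1 - ‖a‖ ^ 2) * (1 - ‖z‖ ^ 2) / (1 + ‖a‖) ^ 2 := by field_simp; ring
    _ ≤ (1 - ‖a‖ ^ 2) * (1 - ‖z‖ ^ 2) / (1 + ‖a‖ * ‖z‖) ^ 2 := by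
        gcongr; exact mul_le_of_le_one_right (norm_nonneg a) hz
    _ ≤ 1 - ‖mobius a z‖ ^ 2 := one_sub_norm_mobius_sq_ge ha hz

lemma DifferentiableOn.mobius {f : ℂ → ℂ} {s : Set ℂ} (hf : DifferentiableOn ℂ f s)
    (ha : ‖a‖ < 1) (hmaps : MapsTo f s (closedBall 0 1)) :
    DifferentiableOn ℂ (fun z => mobius a (f z)) s :=
  (hf.sub_const a).div ((differentiableOn_const 1).sub (hf.const_mul _))
    fun _ hz => one_sub_conj_mul_ne_zero_s10 ha (mem_closedBall_zero_iff.1 (hmaps hz))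

end Mobius

lemma add_div_one_add_mul_le {c s t : ℝ} (hc0 : 0 ≤ c) (hc1 : c ≤ 1) (hs : 0 ≤ s) (hst : s ≤ t) :
    (s + c) / (1 + c * s) ≤ (t + c) / (1 + c * t) := by
  rw [div_le_div_iff₀ (by positivity) (by nlinarith)]
  nlinarith [mul_nonneg (sub_nonneg.2 hst) (mul_nonneg (sub_nonneg.2 hc1) hc0)]

theorem norm_apply_le_of_mapsTo_ball {h : ℂ → ℂ} {z : ℂ} (hd : DifferentiableOn ℂ h (ball 0 1))
    (hmaps : MapsTo h (ball 0 1) (closedBall 0 1)) (hz : ‖z‖ < 1) :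
    ‖h z‖ ≤ (‖z‖ + ‖h 0‖) / (1 + ‖h 0‖ * ‖z‖) := by
  have hz' : z ∈ ball (0 : ℂ) 1 := mem_ball_zero_iff.2 hz
  have hle : ∀ w ∈ ball (0 : ℂ) 1, ‖h w‖ ≤ 1 := fun w hw => mem_closedBall_zero_iff.1 (hmaps hw)
  rcases (hle 0 (mem_ball_self one_pos)).lt_or_eq with hc | hc
  · have hG : ‖mobius (h 0) (h z)‖ ≤ ‖z‖ :=
      Complex.norm_le_norm_of_mapsTo_ball (f := fun w => mobius (h 0) (h w)) (hd.mobius hc hmaps)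
        (fun w hw => mem_closedBall_zero_iff.2 (norm_mobius_le_one hc (hle w hw)))
        (mobius_self _) hz
    calc ‖h z‖ = ‖mobius (-h 0) (mobius (h 0) (h z))‖ := by
          rw [mobius_neg_mobius hc (hle z hz')]
      _ ≤ (‖mobius (h 0) (h z)‖ + ‖h 0‖) / (1 + ‖h 0‖ * ‖mobius (h 0) (h z)‖) := by
          simpa only [norm_neg] using norm_mobius_le (a := -h 0) (by rwa [norm_neg])
            (norm_mobius_le_one hc (hle z hz'))
      _ ≤ (‖z‖ + ‖h 0‖) / (1 + ‖h 0‖ * ‖z‖) :=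
          add_div_one_add_mul_le (norm_nonneg _) hc.le (norm_nonneg _) hG
  · rw [hc, one_mul, add_comm, div_self (by positivity)]
    exact hle z hz'

theorem norm_apply_le_of_mapsTo_ball_of_apply_zero {F : ℂ → ℂ} {z : ℂ}
    (hd : DifferentiableOn ℂ F (ball 0 1)) (hmaps : MapsTo F (ball 0 1) (closedBall 0 1))
    (h0 : F 0 = 0) (hz : ‖z‖ < 1) :
    ‖F z‖ ≤ ‖z‖ * ((‖z‖ + ‖deriv F 0‖) / (1 + ‖deriv F 0‖ * ‖z‖)) := by
  have hslope : MapsTo (dslope F 0) (ball 0 1) (closedBall 0 1) := fun w hw => by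
    simpa using Complex.norm_dslope_le_div_of_mapsTo_ball hd (by rwa [h0]) hw
  have h := norm_apply_le_of_mapsTo_ball
    ((differentiableOn_dslope (ball_mem_nhds _ one_pos)).2 hd) hslope hz
  rw [dslope_same] at h
  have hF : z • dslope F 0 z = F z := by simpa [h0] using sub_smul_dslope F 0 z
  calc ‖F z‖ = ‖z‖ * ‖dslope F 0 z‖ := by rw [← hF, norm_smul]
    _ ≤ _ := by gcongr

lemma tendsto_ofReal_mul_nhdsLT_one {b : ℂ} (hb : ‖b‖ = 1) :
    Tendsto (fun r : ℝ => (r : ℂ) * b) (𝓝[<] 1) (𝓝[ball 0 1] b) := by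
  refine tendsto_nhdsWithin_iff.2 ⟨?_, ?_⟩
  · have : Continuous fun r : ℝ => (r : ℂ) * b := by fun_prop
    simpa using (this.tendsto 1).mono_left nhdsWithin_le_nhds
  · filter_upwards [Ioo_mem_nhdsLT one_pos] with r hr
    simp [hb, abs_of_pos hr.1, hr.2]

theorem le_norm_of_tendsto_slope {f : ℂ → ℂ} {b fb' : ℂ} {L : ℝ → ℝ} (hb : ‖b‖ = 1)
    (hfb : ‖f b‖ = 1)
    (hderiv : Tendsto (fun z => (f z - f b) / (z - b)) (𝓝[ball 0 1] b) (𝓝 fb'))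
    (hL : ContinuousWithinAt L (Iio 1) 1)
    (hbound : ∀ r ∈ Ico (0 : ℝ) 1, L r * (1 - r) ≤ 1 - ‖f (r * b)‖) : L 1 ≤ ‖fb'‖ := by
  refine le_of_tendsto_of_tendsto hL (hderiv.comp (tendsto_ofReal_mul_nhdsLT_one hb)).norm ?_
  filter_upwards [Ioo_mem_nhdsLT one_pos] with r ⟨hr0, hr1⟩
  have hdist : ‖(r : ℂ) * b - b‖ = 1 - r := by
    rw [← sub_one_mul, norm_mul, hb, mul_one, ← ofReal_one, ← ofReal_sub, norm_real,
      Real.norm_of_nonpos (by linarith), neg_sub]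
  calc L r ≤ (1 - ‖f (r * b)‖) / (1 - r) :=
        (le_div_iff₀ (by linarith)).2 (hbound r ⟨hr0.le, hr1⟩)
    _ ≤ ‖f (r * b) - f b‖ / ‖(r : ℂ) * b - b‖ := by
        rw [hdist]
        gcongr
        simpa [hfb, norm_sub_rev] using norm_sub_norm_le (f b) (f (r * b))
    _ = ‖(f (r * b) - f b) / (r * b - b)‖ := (norm_div _ _).symm

theorem one_sub_norm_sq_ge_of_mapsTo_ball {f : ℂ → ℂ} {z : ℂ} {c : ℝ}
    (hd : DifferentiableOn ℂ f (ball 0 1)) (hmaps : MapsTo f (ball 0 1) (ball 0 1))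
    (hc : ‖deriv (fun w => mobius (f 0) (f w)) 0‖ = c) (hz : ‖z‖ < 1) :
    (1 - ‖f 0‖) / (1 + ‖f 0‖) * (1 - (‖z‖ * ((‖z‖ + c) / (1 + c * ‖z‖))) ^ 2) ≤
      1 - ‖f z‖ ^ 2 := by
  have hmaps' : MapsTo f (ball 0 1) (closedBall 0 1) := hmaps.mono_right ball_subset_closedBall
  have hf0 : ‖f 0‖ < 1 := mem_ball_zero_iff.1 (hmaps (mem_ball_self one_pos))
  have hfz : ‖f z‖ ≤ 1 := mem_closedBall_zero_iff.1 (hmaps' (mem_ball_zero_iff.2 hz))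
  have hF := norm_apply_le_of_mapsTo_ball_of_apply_zero (hd.mobius hf0 hmaps')
    (fun w hw => mem_closedBall_zero_iff.2
      (norm_mobius_le_one hf0 (mem_closedBall_zero_iff.1 (hmaps' hw))))
    (mobius_self _) hz
  rw [hc] at hF
  have hf := one_sub_norm_sq_mul_le_one_sub_norm_mobius_sq (a := -f 0) (by rwa [norm_neg])
    (norm_mobius_le_one hf0 hfz)
  rw [mobius_neg_mobius hf0 hfz, norm_neg] at hf
  refine le_trans ?_ hf
  have : 0 ≤ 1 - ‖f 0‖ := by linarith
  gcongr

lemma mul_one_sub_le_one_sub_of_mul_le_one_sub_sq {K c r s : ℝ} (hc : 0 ≤ c) (hr : 0 ≤ r)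
    (h : K * (1 - (r * ((r + c) / (1 + c * r))) ^ 2) ≤ 1 - s ^ 2) :
    K * ((1 + r) * (1 + 2 * c * r + r ^ 2) / (2 * (1 + c * r) ^ 2)) * (1 - r) ≤ 1 - s := by
  have hρ : K * ((1 + r) * (1 + 2 * c * r + r ^ 2) / (2 * (1 + c * r) ^ 2)) * (1 - r) =
      K * (1 - (r * ((r + c) / (1 + c * r))) ^ 2) / 2 := by
    field_simp
    ring
  rw [hρ]
  nlinarith [sq_nonneg (1 - s)]

theorem general_boundary_lemma_general
    (f F : ℂ → ℂ) (b fb' : ℂ)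
    (ha : DifferentiableOn ℂ f {z : ℂ | ‖z‖ < 1})
    (hb : ∀ z : ℂ, ‖z‖ < 1 → ‖f z‖ < 1)
    (hbmod : ‖b‖ = 1)
    (hfb : ‖f b‖ = 1)
    (hderiv : Tendsto (fun z => (f z - f b) / (z - b))
      (nhdsWithin b {z : ℂ | ‖z‖ < 1}) (nhds fb'))
    (hF : F = fun z => (f z - f 0) / (1 - (starRingEnd ℂ) (f 0) * f z)) :
    2 / (1 + ‖deriv F 0‖) *
        ((1 - ‖f 0‖) / (1 + ‖f 0‖)) ≤ ‖fb'‖ := by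
  obtain rfl : F = fun z => mobius (f 0) (f z) := hF
  rw [← ball_zero_eq] at ha hderiv
  have hmaps : MapsTo f (ball 0 1) (ball 0 1) := fun z hz =>
    mem_ball_zero_iff.2 (hb z (mem_ball_zero_iff.1 hz))
  set c := ‖deriv (fun z => mobius (f 0) (f z)) 0‖ with hc
  set K := (1 - ‖f 0‖) / (1 + ‖f 0‖)
  have hc0 : 0 ≤ c := norm_nonneg _
  have hL : ContinuousWithinAt
      (fun r : ℝ => K * ((1 + r) * (1 + 2 * c * r + r ^ 2) / (2 * (1 + c * r) ^ 2))) (Iio 1) 1 :=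
    ContinuousAt.continuousWithinAt (by fun_prop (disch := positivity))
  have key := le_norm_of_tendsto_slope hbmod hfb hderiv hL fun r ⟨hr0, hr1⟩ => by
    have hz : ‖(r : ℂ) * b‖ = r := by simp [hbmod, abs_of_nonneg hr0]
    have h := one_sub_norm_sq_ge_of_mapsTo_ball ha hmaps hc.symm (hz ▸ hr1)
    rw [hz] at h
    exact mul_one_sub_le_one_sub_of_mul_le_one_sub_sq hc0 hr0 h
  convert key using 1
  field_simp
  ring

/-- **The General Boundary Lemma.** Let `f` be holomorphic on the unit disk with
`|f| < 1` there (not assuming `f 0 = 0`), extending continuously to a boundary point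
`b` with `|f b| = 1` and with derivative `fb'` at `b` (as a limit within the disk).
With `F z = (f z - f 0) / (1 - conj (f 0) · f z)`, one has
`|f'(b)| ≥ (2 / (1 + |F'(0)|)) · (1 - |f 0|) / (1 + |f 0|)`. -/
theorem general_boundary_lemma
    (f F : ℂ → ℂ) (b fb' : ℂ)
    (ha : DifferentiableOn ℂ f {z : ℂ | ‖z‖ < 1})
    (hb : ∀ z : ℂ, ‖z‖ < 1 → ‖f z‖ < 1)
    (hbmod : ‖b‖ = 1)
    (hcont : ContinuousWithinAt f ({z : ℂ | ‖z‖ < 1} ∪ {b}) b)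
    (hfb : ‖f b‖ = 1)
    (hderiv : Tendsto (fun z => (f z - f b) / (z - b))
      (nhdsWithin b {z : ℂ | ‖z‖ < 1}) (nhds fb'))
    (hF : F = fun z => (f z - f 0) / (1 - (starRingEnd ℂ) (f 0) * f z)) :
    2 / (1 + ‖deriv F 0‖) *
        ((1 - ‖f 0‖) / (1 + ‖f 0‖)) ≤ ‖fb'‖ :=
  general_boundary_lemma_general f F b fb' ha hb hbmod hfb hderiv hF
end
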